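/- arXiv:1806.03868 — 2 statements merged into one kernel-verified Lean document; each statement's English description precedes it below -/
import Mathlib

section
/- Let V be a surjective m-ordered PSO on the infinite-dimensional simplex S. Then for every k ∈ ℕ there exists j_k ∈ ℕ such that P_{j_k j_k ... j_k, k} = 1 (the diagonal entry with all first m indices equal to j_k). -/
/-!
If `V x = e_k` with `x ∈ S`, then `∑ᵢ P_{i,k} xᵢ₁ ⋯ xᵢₘ = 1 = ∑ᵢ xᵢ₁ ⋯ xᵢₘ`, and since every
`P_{i,k} ≤ 1`, this forces `P_{i,k} = 1` whenever `xᵢ₁ ⋯ xᵢₘ > 0`; take `i = (j, …, j)` with `x_j > 0`.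
-/

/-- The m-ordered polynomial operator associated to a hypermatrix `P`. -/
noncomputable def psoV (m : ℕ) (P : (Fin m → ℕ) → ℕ → ℝ) (x : ℕ → ℝ) (k : ℕ) : ℝ :=
  ∑' i : Fin m → ℕ, P i k * ∏ j, x (i j)

/-- The hypermatrix is stochastic. -/
def IsStochastic (m : ℕ) (P : (Fin m → ℕ) → ℕ → ℝ) : Prop :=
  (∀ i k, 0 ≤ P i k) ∧ ∀ i, HasSum (fun k => P i k) 1

/-- symmetry of the hypermatrix in its first m indices. -/
def HypSymm (m : ℕ) (P : (Fin m → ℕ) → ℕ → ℝ) : Prop :=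
  ∀ (σ : Equiv.Perm (Fin m)) (i : Fin m → ℕ) (k : ℕ), P (i ∘ σ) k = P i k

/-- membership in the infinite-dimensional simplex S. -/
def inS (x : ℕ → ℝ) : Prop := (∀ i, 0 ≤ x i) ∧ HasSum x 1

/-- the standard basis vector e_i. -/
def stdBasis (i : ℕ) : ℕ → ℝ := fun n => if n = i then 1 else 0

/-- x and y are orthogonal: disjoint supports. -/
def Orth (x y : ℕ → ℝ) : Prop := ∀ k, x k * y k = 0

/-- V is orthogonal preserving on S. -/
def IsOP (m : ℕ) (P : (Fin m → ℕ) → ℕ → ℝ) : Prop :=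
  ∀ x y : ℕ → ℝ, inS x → inS y → Orth x y → Orth (psoV m P x) (psoV m P y)

/-- V is surjective on S. -/
def SurjOnS (m : ℕ) (P : (Fin m → ℕ) → ℕ → ℝ) : Prop :=
  ∀ y : ℕ → ℝ, inS y → ∃ x : ℕ → ℝ, inS x ∧ psoV m P x = y

theorem hasSum_prod_pi_of_nonneg {ι : Type*} {x : ι → ℝ} {a : ℝ} (hx₀ : 0 ≤ x) (hx : HasSum x a)
    (m : ℕ) : HasSum (fun i : Fin m → ι => ∏ j, x (i j)) (a ^ m) := by
  induction m with
  | zero => simp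
  | succ n ih =>
    have hprod₀ : 0 ≤ fun i : Fin n → ι => ∏ j, x (i j) := fun i => Finset.prod_nonneg fun j _ => hx₀ _
    have hsummable := hx.summable.mul_of_nonneg ih.summable hx₀ hprod₀
    rw [pow_succ', ← (Fin.consEquiv fun _ => ι).hasSum_iff]
    simpa [Function.comp_def, Fin.prod_univ_succ] using hx.mul ih hsummable

theorem eq_one_of_hasSum_mul {ι : Type*} {p w : ι → ℝ} {a : ℝ} (hp : ∀ i, p i ≤ 1) (hw₀ : 0 ≤ w)
    (hpw : HasSum (fun i => p i * w i) a) (hw : HasSum w a) {i : ι} (hi : 0 < w i) : p i = 1 := by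
  by_contra hne
  have hlt : p i * w i < w i := mul_lt_of_lt_one_left hi ((hp i).lt_of_ne hne)
  exact lt_irrefl a (hasSum_lt (fun i => mul_le_of_le_one_left (hw₀ i) (hp i)) hlt hpw hw)

theorem inS_stdBasis (k : ℕ) : inS (stdBasis k) :=
  ⟨fun n => by unfold stdBasis; split_ifs <;> norm_num, hasSum_ite_eq k 1⟩

theorem inS.exists_pos {x : ℕ → ℝ} (hx : inS x) : ∃ j, 0 < x j := by
  by_contra! h
  have hzero : x = 0 := funext fun j => (h j).antisymm (hx.1 j)
  exact one_ne_zero (hx.2.unique (hzero ▸ hasSum_zero))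

namespace IsStochastic

variable {m : ℕ} {P : (Fin m → ℕ) → ℕ → ℝ}

theorem le_one (hP : IsStochastic m P) (i : Fin m → ℕ) (k : ℕ) : P i k ≤ 1 :=
  le_hasSum (hP.2 i) k fun n _ => hP.1 i n

theorem hasSum_psoV (hP : IsStochastic m P) {x : ℕ → ℝ} (hx : inS x) (k : ℕ) :
    HasSum (fun i => P i k * ∏ j, x (i j)) (psoV m P x k) := by
  have hprod₀ : ∀ i : Fin m → ℕ, 0 ≤ ∏ j, x (i j) := fun i => Finset.prod_nonneg fun j _ => hx.1 _
  refine (Summable.of_nonneg_of_le (fun i => mul_nonneg (hP.1 i k) (hprod₀ i))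
    (fun i => mul_le_of_le_one_left (hprod₀ i) (hP.le_one i k)) ?_).hasSum
  exact (hasSum_prod_pi_of_nonneg hx.1 hx.2 m).summable

end IsStochastic

theorem stmt8_general (m : ℕ) (P : (Fin m → ℕ) → ℕ → ℝ)
    (hP : IsStochastic m P) (hsur : SurjOnS m P) :
    ∀ k : ℕ, ∃ j : ℕ, P (fun _ => j) k = 1 := by
  intro k
  obtain ⟨x, hx, hVx⟩ := hsur (stdBasis k) (inS_stdBasis k)
  obtain ⟨j, hj⟩ := hx.exists_pos
  have hVk : HasSum (fun i => P i k * ∏ l, x (i l)) 1 := by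
    simpa [hVx, stdBasis] using hP.hasSum_psoV hx k
  have hprod : HasSum (fun i : Fin m → ℕ => ∏ l, x (i l)) 1 := by
    simpa using hasSum_prod_pi_of_nonneg hx.1 hx.2 m
  exact ⟨j, eq_one_of_hasSum_mul (hP.le_one · k)
    (fun i => Finset.prod_nonneg fun l _ => hx.1 _) hVk hprod (by simpa using pow_pos hj m)⟩

theorem stmt8 (m : ℕ) (hm : 1 ≤ m) (P : (Fin m → ℕ) → ℕ → ℝ)
    (hP : IsStochastic m P) (hsur : SurjOnS m P) :
    ∀ k : ℕ, ∃ j : ℕ, P (fun _ => j) k = 1 :=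
  stmt8_general m P hP hsur
end

section
/- Let V be a surjective m-ordered PSO on S with V(e_i) = e_i for all i. Then for any finite nonempty set {i_1,...,i_j} ⊂ ℕ with j ≤ m, V maps int Γ_{{i_1,...,i_j}} onto int Γ_{{i_1,...,i_j}}, and every preimage of a point of int Γ_{{i_1,...,i_j}} lies in int Γ_{{i_1,...,i_j}}. -/
/-- membership in the relative interior of the face Γ_A of the simplex. -/
def inIntFace (A : Set ℕ) (x : ℕ → ℝ) : Prop :=
  inS x ∧ (∀ i ∈ A, 0 < x i) ∧ ∀ i ∉ A, x i = 0

/-!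
Testing `V` on `e_a` gives `P_{a…a,a} = 1`, hence `V(x)_a ≥ x_a ^ m`: `V(x)` can vanish only where
`x` does. Now pick a point of `int Γ_B` and a preimage `x` under the surjective `V`; if
every proper face of `Γ_B` is `V`-invariant, the first fact forces `x ∈ int Γ_B`, and then
`0 = V(x)_k ≥ P_{i,k} ∏ x_{i_j}` kills every coefficient `P_{i,k}` with `i_j ∈ B`, `k ∉ B`.
By induction on `|B|` every face is `V`-invariant, and the theorem follows.
-/

open Finset

lemma hasSum_prod_pow {α : Type*} {x : α → ℝ} {s : ℝ} (hx0 : ∀ n, 0 ≤ x n) (hx : HasSum x s)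
    (m : ℕ) : HasSum (fun i : Fin m → α => ∏ j, x (i j)) (s ^ m) := by
  induction m with
  | zero => simp
  | succ m ih =>
    have hsum : Summable fun p : α × (Fin m → α) => x p.1 * ∏ j, x (p.2 j) :=
      Summable.mul_of_nonneg (f := x) (g := fun i : Fin m → α => ∏ j, x (i j))
        hx.summable ih.summable hx0 fun i => prod_nonneg fun j _ => hx0 _
    rw [pow_succ', ← (Fin.consEquiv fun _ => α).hasSum_iff]
    simpa [Function.comp_def, Fin.consEquiv, Fin.prod_univ_succ] using hx.mul ih hsum

/-- Coefficient form of `V(Γ_C) ⊆ Γ_C`. -/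
def PreservesFace (m : ℕ) (P : (Fin m → ℕ) → ℕ → ℝ) (C : Set ℕ) : Prop :=
  ∀ (i : Fin m → ℕ) (k : ℕ), Set.range i ⊆ C → k ∉ C → P i k = 0

section

variable {m : ℕ} {P : (Fin m → ℕ) → ℕ → ℝ} {x : ℕ → ℝ}

lemma psoV_stdBasis (a : ℕ) : psoV m P (stdBasis a) = P (fun _ => a) := by
  funext k
  rw [psoV, tsum_eq_single (fun _ => a)]
  · simp [stdBasis]
  · intro i hi
    obtain ⟨j, hj⟩ := Function.ne_iff.mp hi
    rw [prod_eq_zero (mem_univ j) (by simp [stdBasis, hj]), mul_zero]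

lemma summable_psoV_terms (hP : IsStochastic m P) (hx : inS x) (k : ℕ) :
    Summable fun i : Fin m → ℕ => P i k * ∏ j, x (i j) := by
  refine .of_nonneg_of_le (fun i => mul_nonneg (hP.1 i k) (prod_nonneg fun j _ => hx.1 _))
    (fun i => ?_) (hasSum_prod_pow hx.1 hx.2 m).summable
  have hPle : P i k ≤ 1 := le_hasSum (hP.2 i) k fun j _ => hP.1 i j
  exact mul_le_of_le_one_left (prod_nonneg fun j _ => hx.1 _) hPle

lemma term_le_psoV (hP : IsStochastic m P) (hx : inS x) (i : Fin m → ℕ) (k : ℕ) :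
    P i k * ∏ j, x (i j) ≤ psoV m P x k :=
  (summable_psoV_terms hP hx k).le_tsum i
    fun j _ => mul_nonneg (hP.1 j k) (prod_nonneg fun _ _ => hx.1 _)

lemma inS_psoV (hP : IsStochastic m P) (hx : inS x) : inS (psoV m P x) := by
  set f : (Fin m → ℕ) × ℕ → ℝ := fun p => P p.1 p.2 * ∏ j, x (p.1 j)
  have hf0 : 0 ≤ f := fun p => mul_nonneg (hP.1 _ _) (prod_nonneg fun j _ => hx.1 _)
  have hfib : ∀ i, HasSum (fun k => f (i, k)) (∏ j, x (i j)) := fun i => by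
    simpa using (hP.2 i).mul_right (∏ j, x (i j))
  have hprod : HasSum (fun i : Fin m → ℕ => ∏ j, x (i j)) 1 := by
    simpa using hasSum_prod_pow hx.1 hx.2 m
  obtain ⟨s, hs⟩ : Summable f := (summable_prod_of_nonneg hf0).2
    ⟨fun i => (hfib i).summable, by simpa only [(hfib _).tsum_eq] using hprod.summable⟩
  obtain rfl : s = 1 := (hs.prod_fiberwise hfib).unique hprod
  refine ⟨fun k => tsum_nonneg fun i => hf0 (i, k), ?_⟩
  exact ((Equiv.prodComm _ _).hasSum_iff.mpr hs).prod_fiberwise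
    fun k => (summable_psoV_terms hP hx k).hasSum

lemma pow_le_psoV (hP : IsStochastic m P) {a : ℕ} (hdiag : P (fun _ => a) a = 1)
    (hx : inS x) : x a ^ m ≤ psoV m P x a := by
  simpa [hdiag] using term_le_psoV hP hx (fun _ => a) a

lemma eq_zero_of_psoV_eq_zero (hm : m ≠ 0) (hP : IsStochastic m P) {a : ℕ}
    (hdiag : P (fun _ => a) a = 1) (hx : inS x) (h : psoV m P x a = 0) : x a = 0 :=
  pow_eq_zero_iff hm |>.mp <|
    le_antisymm (h ▸ pow_le_psoV hP hdiag hx) (pow_nonneg (hx.1 a) m)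

lemma P_eq_zero_of_psoV_eq_zero (hP : IsStochastic m P) (hx : inS x) {i : Fin m → ℕ} {k : ℕ}
    (hpos : ∀ j, 0 < x (i j)) (h : psoV m P x k = 0) : P i k = 0 := by
  have hprod : 0 < ∏ j, x (i j) := prod_pos fun j _ => hpos j
  have hle := term_le_psoV hP hx i k
  rw [h] at hle
  exact le_antisymm (nonpos_of_mul_nonpos_left hle hprod) (hP.1 i k)

lemma PreservesFace.psoV_eq_zero {C : Set ℕ} (hC : PreservesFace m P C)
    (hx : ∀ n ∉ C, x n = 0) {k : ℕ} (hk : k ∉ C) : psoV m P x k = 0 := by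
  suffices h : ∀ i : Fin m → ℕ, P i k * ∏ j, x (i j) = 0 by simp [psoV, h]
  intro i
  by_cases hi : Set.range i ⊆ C
  · rw [hC i k hi hk, zero_mul]
  · obtain ⟨_, ⟨j, rfl⟩, hj⟩ := Set.not_subset.mp hi
    rw [prod_eq_zero (mem_univ j) (hx _ hj), mul_zero]

lemma inIntFace_psoV (hP : IsStochastic m P) (hdiag : ∀ a, P (fun _ => a) a = 1)
    {A : Set ℕ} (hA : PreservesFace m P A) (hx : inIntFace A x) :
    inIntFace A (psoV m P x) :=
  ⟨inS_psoV hP hx.1,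
    fun a ha => (pow_pos (hx.2.1 a ha) m).trans_le (pow_le_psoV hP (hdiag a) hx.1),
    fun _ hk => hA.psoV_eq_zero hx.2.2 hk⟩

lemma inIntFace_of_inIntFace_psoV (hm : m ≠ 0) (hP : IsStochastic m P)
    (hdiag : ∀ a, P (fun _ => a) a = 1) {A : Set ℕ} (hA : ∀ a ∈ A, PreservesFace m P (A \ {a}))
    (hx : inS x) (hVx : inIntFace A (psoV m P x)) : inIntFace A x := by
  obtain ⟨-, hVpos, hV0⟩ := hVx
  have hx0 : ∀ n ∉ A, x n = 0 := fun n hn =>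
    eq_zero_of_psoV_eq_zero hm hP (hdiag n) hx (hV0 n hn)
  refine ⟨hx, fun a ha => (hx.1 a).lt_of_ne' fun hxa => (hVpos a ha).ne' ?_, hx0⟩
  refine (hA a ha).psoV_eq_zero (fun n hn => ?_) fun h => h.2 rfl
  by_cases hna : n = a
  · rw [hna, hxa]
  · exact hx0 n fun h => hn ⟨h, hna⟩

lemma exists_inIntFace {A : Finset ℕ} (hA : A.Nonempty) : ∃ y, inIntFace A y := by
  set y : ℕ → ℝ := fun n => if n ∈ A then (#A : ℝ)⁻¹ else 0
  have hy : HasSum y (∑ n ∈ A, y n) := hasSum_sum_of_ne_finset_zero fun n hn => if_neg hn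
  rw [sum_ite_mem, inter_self, sum_const, nsmul_eq_mul,
    mul_inv_cancel₀ (Nat.cast_ne_zero.mpr hA.card_pos.ne')] at hy
  exact ⟨y, ⟨fun n => by positivity, hy⟩, fun a ha => by simp [y, mem_coe.mp ha, hA.card_pos],
    fun n hn => if_neg hn⟩

theorem preservesFace_of_surjOnS (hm : m ≠ 0) (hP : IsStochastic m P) (hsur : SurjOnS m P)
    (hdiag : ∀ a, P (fun _ => a) a = 1) (B : Finset ℕ) : PreservesFace m P B := by
  induction B using Finset.strongInduction with
  | H B ih =>
  intro i k hi hk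
  obtain ⟨y, hy⟩ := exists_inIntFace ⟨i ⟨0, Nat.pos_of_ne_zero hm⟩, hi ⟨_, rfl⟩⟩
  obtain ⟨x, hx, rfl⟩ := hsur y hy.1
  have hxB : inIntFace B x := inIntFace_of_inIntFace_psoV hm hP hdiag
    (fun a ha => by simpa using ih (B.erase a) (erase_ssubset ha)) hx hy
  exact P_eq_zero_of_psoV_eq_zero hP hx (fun j => hxB.2.1 _ (hi ⟨j, rfl⟩)) (hy.2.2 k hk)

end

theorem stmt18_general (m : ℕ) (hm : 1 ≤ m) (P : (Fin m → ℕ) → ℕ → ℝ)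
    (hP : IsStochastic m P)
    (hsur : SurjOnS m P)
    (hfix : ∀ i : ℕ, psoV m P (stdBasis i) = stdBasis i)
    (A : Finset ℕ) :
    (∀ x : ℕ → ℝ, inIntFace (A : Set ℕ) x → inIntFace (A : Set ℕ) (psoV m P x)) ∧
    (∀ y : ℕ → ℝ, inIntFace (A : Set ℕ) y →
      ∃ x : ℕ → ℝ, inIntFace (A : Set ℕ) x ∧ psoV m P x = y) ∧
    (∀ x : ℕ → ℝ, inS x → inIntFace (A : Set ℕ) (psoV m P x) →
      inIntFace (A : Set ℕ) x) := by
  have hm0 : m ≠ 0 := Nat.one_le_iff_ne_zero.mp hm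
  have hdiag : ∀ a, P (fun _ => a) a = 1 := fun a => by
    simpa [psoV_stdBasis, stdBasis] using congrFun (hfix a) a
  have hface := preservesFace_of_surjOnS hm0 hP hsur hdiag
  have hpre : ∀ x, inS x → inIntFace A (psoV m P x) → inIntFace A x := fun x hx =>
    inIntFace_of_inIntFace_psoV hm0 hP hdiag (fun a _ => by simpa using hface (A.erase a)) hx
  refine ⟨fun x => inIntFace_psoV hP hdiag (hface A), fun y hy => ?_, hpre⟩
  obtain ⟨x, hx, rfl⟩ := hsur y hy.1
  exact ⟨x, hpre x hx hy, rfl⟩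

theorem stmt18 (m : ℕ) (hm : 1 ≤ m) (P : (Fin m → ℕ) → ℕ → ℝ)
    (hP : IsStochastic m P) (hsym : HypSymm m P)
    (hsur : SurjOnS m P)
    (hfix : ∀ i : ℕ, psoV m P (stdBasis i) = stdBasis i)
    (A : Finset ℕ) (hA : A.Nonempty) (hcard : A.card ≤ m) :
    (∀ x : ℕ → ℝ, inIntFace (A : Set ℕ) x → inIntFace (A : Set ℕ) (psoV m P x)) ∧
    (∀ y : ℕ → ℝ, inIntFace (A : Set ℕ) y →
      ∃ x : ℕ → ℝ, inIntFace (A : Set ℕ) x ∧ psoV m P x = y) ∧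
    (∀ x : ℕ → ℝ, inS x → inIntFace (A : Set ℕ) (psoV m P x) →
      inIntFace (A : Set ℕ) x) :=
  stmt18_general m hm P hP hsur hfix A
end
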